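/- arXiv:1706.07252 — 2 statements merged into one kernel-verified Lean document; each statement's English description precedes it below -/
import Mathlib

section
/- Let (V, ⟨·,·⟩) be a 2g-dimensional symplectic 𝔽₂-vector space with symplectic basis a₁,b₁,…,a_g,b_g, and q a quadratic form refining ⟨·,·⟩. Define Arf(q) = Σᵢ q(aᵢ)q(bᵢ) ∈ 𝔽₂. Then Arf(q) is independent of the choice of symplectic basis. -/
/-!
The Gauss sum `∑ v, (-1) ^ q v` does not refer to any basis. In a symplectic basis `V` is an
orthogonal sum of hyperbolic planes `⟨aᵢ, bᵢ⟩`, on which `q` is additive, so the Gauss sum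
factors as a product over the planes; the plane `⟨aᵢ, bᵢ⟩` contributes `2 (-1) ^ (q aᵢ q bᵢ)`.
Hence the Gauss sum equals `2 ^ g (-1) ^ Arf(q)` for every symplectic basis.
-/

open Module

theorem AddChar.map_sum_eq_prod {A M ι : Type*} [AddCommMonoid A] [CommMonoid M]
    (ψ : AddChar A M) (s : Finset ι) (f : ι → A) : ψ (∑ i ∈ s, f i) = ∏ i ∈ s, ψ (f i) := by
  classical
  induction s using Finset.induction_on with
  | empty => simp
  | insert a s ha ih => rw [Finset.sum_insert ha, Finset.prod_insert ha, map_add_eq_mul, ih]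

def signChar : AddChar (ZMod 2) ℤ where
  toFun x := (-1) ^ x.val
  map_zero_eq_one' := rfl
  map_add_eq_mul' := by decide

theorem signChar_injective : Function.Injective signChar := by decide

theorem sum_signChar_hyperbolic (a b : ZMod 2) :
    ∑ p : ZMod 2 × ZMod 2, signChar (p.1 * a + p.2 * b + p.1 * p.2) = 2 * signChar (a * b) := by
  decide +revert

section QuadraticRefinement

variable {V : Type*} [AddCommGroup V] [Module (ZMod 2) V]
  {B : V →ₗ[ZMod 2] V →ₗ[ZMod 2] ZMod 2} {q : V → ZMod 2}

theorem map_zero_of_refines (hq : ∀ x y, q (x + y) = q x + q y + B x y) : q 0 = 0 := by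
  simpa using hq 0 0

theorem polar_comm (hq : ∀ x y, q (x + y) = q x + q y + B x y) (x y : V) : B x y = B y x := by
  have h := hq y x
  rw [add_comm y x, hq x y, add_comm (q y)] at h
  exact add_left_cancel h

theorem map_smul_of_refines (hq : ∀ x y, q (x + y) = q x + q y + B x y) (c : ZMod 2) (v : V) :
    q (c • v) = c * q v := by
  obtain rfl | rfl : c = 0 ∨ c = 1 := by decide +revert
  all_goals simp [map_zero_of_refines hq]

theorem map_sum_of_pairwise_polar_eq_zero (hq : ∀ x y, q (x + y) = q x + q y + B x y)
    {ι : Type*} (s : Finset ι) (f : ι → V)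
    (hf : (s : Set ι).Pairwise fun i j => B (f i) (f j) = 0) :
    q (∑ i ∈ s, f i) = ∑ i ∈ s, q (f i) := by
  induction s using Finset.cons_induction with
  | empty => simpa using map_zero_of_refines hq
  | cons a s ha ih =>
    rw [Finset.coe_cons, Set.pairwise_insert] at hf
    have horth : B (f a) (∑ i ∈ s, f i) = 0 := by
      rw [map_sum]
      exact Finset.sum_eq_zero fun j hj => (hf.2 j hj (ne_of_mem_of_not_mem hj ha).symm).1
    rw [Finset.sum_cons, Finset.sum_cons, hq, ih hf.1, horth, add_zero]

end QuadraticRefinement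

section SymplecticBasis

variable {V : Type*} [AddCommGroup V] [Module (ZMod 2) V] {g : ℕ}

def IsSymplecticBasis (B : V →ₗ[ZMod 2] V →ₗ[ZMod 2] ZMod 2)
    (e : Basis (Fin g ⊕ Fin g) (ZMod 2) V) : Prop :=
  ∀ i j : Fin g,
    B (e (Sum.inl i)) (e (Sum.inr j)) = (if i = j then 1 else 0) ∧
    B (e (Sum.inl i)) (e (Sum.inl j)) = 0 ∧
    B (e (Sum.inr i)) (e (Sum.inr j)) = 0

noncomputable def arf (q : V → ZMod 2) (e : Basis (Fin g ⊕ Fin g) (ZMod 2) V) : ZMod 2 :=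
  ∑ i, q (e (Sum.inl i)) * q (e (Sum.inr i))

variable {B : V →ₗ[ZMod 2] V →ₗ[ZMod 2] ZMod 2} {q : V → ZMod 2}

theorem IsSymplecticBasis.polar_eq_zero_of_ne (hq : ∀ x y, q (x + y) = q x + q y + B x y)
    {e : Basis (Fin g ⊕ Fin g) (ZMod 2) V} (he : IsSymplecticBasis B e) (a b a' b' : ZMod 2)
    {i j : Fin g} (hij : i ≠ j) :
    B (a • e (Sum.inl i) + b • e (Sum.inr i)) (a' • e (Sum.inl j) + b' • e (Sum.inr j)) = 0 := by
  obtain ⟨hxy, hxx, hyy⟩ := he i j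
  have hyx : B (e (Sum.inr i)) (e (Sum.inl j)) = 0 := by
    rw [polar_comm hq, (he j i).1, if_neg (Ne.symm hij)]
  simp [hxy, hxx, hyy, hyx, if_neg hij]

theorem IsSymplecticBasis.map_sum_smul_add_smul (hq : ∀ x y, q (x + y) = q x + q y + B x y)
    {e : Basis (Fin g ⊕ Fin g) (ZMod 2) V} (he : IsSymplecticBasis B e) (a b : Fin g → ZMod 2) :
    q (∑ i, (a i • e (Sum.inl i) + b i • e (Sum.inr i))) =
      ∑ i, (a i * q (e (Sum.inl i)) + b i * q (e (Sum.inr i)) + a i * b i) := by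
  rw [map_sum_of_pairwise_polar_eq_zero hq _ _
    fun i _ j _ hij => he.polar_eq_zero_of_ne hq _ _ _ _ hij]
  refine Finset.sum_congr rfl fun i _ => ?_
  have hxy : B (e (Sum.inl i)) (e (Sum.inr i)) = 1 := by simpa using (he i i).1
  rw [hq, map_smul_of_refines hq, map_smul_of_refines hq]
  simp [hxy, mul_comm]

theorem IsSymplecticBasis.sum_signChar [Fintype V] (hq : ∀ x y, q (x + y) = q x + q y + B x y)
    {e : Basis (Fin g ⊕ Fin g) (ZMod 2) V} (he : IsSymplecticBasis B e) :
    ∑ v : V, signChar (q v) = 2 ^ g * signChar (arf q e) := by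
  let φ : (Fin g → ZMod 2 × ZMod 2) ≃ V :=
    ((Equiv.arrowProdEquivProdArrow _ _ _).trans (Equiv.sumArrowEquivProdArrow _ _ _).symm).trans
      e.equivFun.symm.toEquiv
  have hφ : ∀ d, φ d = ∑ i, ((d i).1 • e (Sum.inl i) + (d i).2 • e (Sum.inr i)) := by
    intro d
    simp [φ, Fintype.sum_sum_type, Finset.sum_add_distrib]
  calc ∑ v, signChar (q v)
      = ∑ d, signChar (q (φ d)) := (φ.sum_comp _).symm
    _ = ∑ d : Fin g → ZMod 2 × ZMod 2, ∏ i, signChar ((d i).1 * q (e (Sum.inl i)) +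
          (d i).2 * q (e (Sum.inr i)) + (d i).1 * (d i).2) := by
        simp only [hφ, he.map_sum_smul_add_smul hq, AddChar.map_sum_eq_prod]
    _ = ∏ i, ∑ p : ZMod 2 × ZMod 2, signChar (p.1 * q (e (Sum.inl i)) +
          p.2 * q (e (Sum.inr i)) + p.1 * p.2) := by
        rw [Finset.prod_univ_sum, Fintype.piFinset_univ]
    _ = ∏ i, 2 * signChar (q (e (Sum.inl i)) * q (e (Sum.inr i))) := by
        simp only [sum_signChar_hyperbolic]
    _ = 2 ^ g * signChar (arf q e) := by
        rw [Finset.prod_mul_distrib, Finset.prod_const, Finset.card_univ, Fintype.card_fin, arf,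
          AddChar.map_sum_eq_prod]

end SymplecticBasis

theorem stmt_3_general (V : Type*) [AddCommGroup V] [Module (ZMod 2) V]
    (g : ℕ)
    (B : V →ₗ[ZMod 2] V →ₗ[ZMod 2] ZMod 2)
    (q : V → ZMod 2)
    (hq : ∀ x y, q (x + y) = q x + q y + B x y)
    (e e' : Module.Basis (Fin g ⊕ Fin g) (ZMod 2) V)
    (he : ∀ i j : Fin g,
      B (e (Sum.inl i)) (e (Sum.inr j)) = (if i = j then 1 else 0) ∧
      B (e (Sum.inl i)) (e (Sum.inl j)) = 0 ∧
      B (e (Sum.inr i)) (e (Sum.inr j)) = 0)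
    (he' : ∀ i j : Fin g,
      B (e' (Sum.inl i)) (e' (Sum.inr j)) = (if i = j then 1 else 0) ∧
      B (e' (Sum.inl i)) (e' (Sum.inl j)) = 0 ∧
      B (e' (Sum.inr i)) (e' (Sum.inr j)) = 0) :
    ∑ i : Fin g, q (e (Sum.inl i)) * q (e (Sum.inr i)) =
      ∑ i : Fin g, q (e' (Sum.inl i)) * q (e' (Sum.inr i)) := by
  let := Module.fintypeOfFintype e
  have hgauss := (IsSymplecticBasis.sum_signChar hq he).symm.trans
    (IsSymplecticBasis.sum_signChar hq he')
  exact signChar_injective (mul_left_cancel₀ (by positivity) hgauss)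

/-- The Arf invariant is independent of the choice of symplectic basis. -/
theorem stmt_3 (V : Type*) [AddCommGroup V] [Module (ZMod 2) V]
    (g : ℕ)
    (B : V →ₗ[ZMod 2] V →ₗ[ZMod 2] ZMod 2)
    (halt : ∀ x, B x x = 0)
    (q : V → ZMod 2)
    (hq : ∀ x y, q (x + y) = q x + q y + B x y)
    (e e' : Module.Basis (Fin g ⊕ Fin g) (ZMod 2) V)
    (he : ∀ i j : Fin g,
      B (e (Sum.inl i)) (e (Sum.inr j)) = (if i = j then 1 else 0) ∧
      B (e (Sum.inl i)) (e (Sum.inl j)) = 0 ∧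
      B (e (Sum.inr i)) (e (Sum.inr j)) = 0)
    (he' : ∀ i j : Fin g,
      B (e' (Sum.inl i)) (e' (Sum.inr j)) = (if i = j then 1 else 0) ∧
      B (e' (Sum.inl i)) (e' (Sum.inl j)) = 0 ∧
      B (e' (Sum.inr i)) (e' (Sum.inr j)) = 0) :
    ∑ i : Fin g, q (e (Sum.inl i)) * q (e (Sum.inr i)) =
      ∑ i : Fin g, q (e' (Sum.inl i)) * q (e' (Sum.inr i)) :=
  stmt_3_general V g B q hq e e' he he'
end

section
/- In a group G, suppose elements a, b, c satisfy the braid relations aba = bab and bcb = cbc, and the commutation relations ac = ca, and suppose elements α, β satisfy αβ = βα, bα = αb, bβ = βb, and (abc)⁴ = αβ. Then (b²ab²c)² = αβ. -/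
/-- Group-theoretic derivation of the modified chain relation. -/
theorem stmt_7 (G : Type*) [Group G] (a b c α β : G)
    (h1 : a * b * a = b * a * b)
    (h2 : b * c * b = c * b * c)
    (h3 : a * c = c * a)
    (h4 : α * β = β * α)
    (h5 : b * α = α * b)
    (h6 : b * β = β * b)
    (h7 : (a * b * c) ^ 4 = α * β) :
    (b ^ 2 * a * b ^ 2 * c) ^ 2 = α * β := by
  have h3' : ∀ x : G, c * (a * x) = a * (c * x) := fun x => by
    rw [← mul_assoc, ← h3, mul_assoc]
  have h1' : ∀ x : G, a * (b * (a * x)) = b * (a * (b * x)) := fun x => by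
    rw [← mul_assoc, ← mul_assoc, h1, mul_assoc, mul_assoc]
  have h2a : c * (b * c) = b * (c * b) := by
    rw [← mul_assoc, ← h2, mul_assoc]
  have key : (a * b * c) ^ 2 = b * (a * (b * (b * (c * b)))) := by
    calc (a * b * c) ^ 2 = a * (b * (c * (a * (b * c)))) := by simp only [pow_succ, pow_zero, one_mul, mul_assoc]
      _ = a * (b * (a * (c * (b * c)))) := by rw [h3']
      _ = a * (b * (a * (b * (c * b)))) := by rw [h2a]
      _ = b * (a * (b * (b * (c * b)))) := by rw [h1']
  have key2 : (b ^ 2 * a * b ^ 2 * c) ^ 2 * b = b * (a * b * c) ^ 4 := by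
    have : (a * b * c) ^ 4 = (a * b * c) ^ 2 * (a * b * c) ^ 2 := by simp only [pow_succ, pow_zero, one_mul, mul_assoc]
    rw [this, key]
    simp only [pow_succ, pow_zero, one_mul, mul_assoc]
  have hcomm : b * (α * β) = (α * β) * b := by
    rw [← mul_assoc, h5, mul_assoc, h6, ← mul_assoc]
  have : (b ^ 2 * a * b ^ 2 * c) ^ 2 * b = (α * β) * b := by
    rw [key2, h7, hcomm]
  exact mul_right_cancel this
end
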